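/- arXiv:2602.21055 — 2 statements merged into one kernel-verified Lean document; each statement's English description precedes it below -/
import Mathlib

section
/- Let K ∈ ℂ^{T×T} be the flip permutation matrix (K_{s,t}=1 iff s=t=1 or s+t=T+2), and define K^{1/2} = e_1 e_1ᵀ + ∑_{ℓ} [(e_ℓ+e_{T−ℓ+2})(e_ℓ+e_{T−ℓ+2})ᵀ/‖e_ℓ+e_{T−ℓ+2}‖² + i(e_ℓ−e_{T−ℓ+2})(e_ℓ−e_{T−ℓ+2})ᵀ/‖e_ℓ−e_{T−ℓ+2}‖²] where the sum ranges over ℓ ∈ {2,…,T} with ℓ ≤ T−ℓ+2 (omitting zero terms). Then (K^{1/2})² = K. -/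
open Matrix

/-- The index map `a ↦ T - a` (0-indexed version of `ℓ ↦ T - ℓ + 2`),
fixing `0`. -/
def flipIdx {T : ℕ} (hT : 0 < T) (a : Fin T) : Fin T :=
  ⟨(T - a.val) % T, Nat.mod_lt _ hT⟩

/-- The standard basis vector `e_j` of `ℂ^T`. -/
def ebC {T : ℕ} (j : Fin T) : Fin T → ℂ := Pi.single j 1

/-!
`K` is the permutation matrix of the involution `σ = flipIdx`. On each orbit `{a, σ a}` the
summand is `P⁺ + i P⁻`, with `P±` the orthogonal projections onto `e_a ± e_{σ a}`, and as a
matrix it equals `D_a (c • 1 + c̄ • K)`, where `c = (1 + i)/2` and `D_a` is the diagonal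
projection onto the coordinates in the orbit. Summing over one representative per orbit gives
`K^{1/2} = c • 1 + c̄ • K`, and `K * K = 1` turns its square into
`(c² + c̄²) • 1 + 2 c c̄ • K = K`.
-/

open Complex

section InvolutionSqrt

variable {A : Type*} [Ring A] [Algebra ℂ A]

noncomputable def involutionSqrt (x : A) : A := ((1 + I) / 2) • 1 + ((1 - I) / 2) • x

theorem involutionSqrt_mul_self {x : A} (hx : x * x = 1) :
    involutionSqrt x * involutionSqrt x = x := by
  simp only [involutionSqrt, add_mul, mul_add, smul_mul_smul_comm, one_mul, mul_one, hx]
  match_scalars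
  · linear_combination (1 / 2 : ℂ) * I_sq
  · linear_combination (-1 / 2 : ℂ) * I_sq

end InvolutionSqrt

section OrbitRepresentatives

variable {α : Type*} [LinearOrder α] {σ : α → α}

theorem Function.Involutive.le_and_mem_pair_iff (hσ : Function.Involutive σ) {a s : α} :
    a ≤ σ a ∧ (s = a ∨ s = σ a) ↔ a = min s (σ s) := by
  constructor
  · rintro ⟨ha, rfl | rfl⟩
    · exact (min_eq_left ha).symm
    · rw [hσ, min_eq_right ha]
  · rintro rfl
    rcases le_total s (σ s) with h | h
    · rw [min_eq_left h]
      exact ⟨h, Or.inl rfl⟩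
    · rw [min_eq_right h, hσ]
      exact ⟨h, Or.inr rfl⟩

theorem Function.Involutive.sum_diagonal_orbit_indicator [Fintype α] {R : Type*} [Semiring R]
    (hσ : Function.Involutive σ) :
    ∑ a ∈ Finset.univ.filter (fun a => a ≤ σ a),
      diagonal (fun s => if s = a ∨ s = σ a then (1 : R) else 0) = 1 := by
  ext s t
  simp only [Matrix.sum_apply, diagonal_apply, one_apply]
  split_ifs
  · simp_rw [Finset.sum_filter, ← ite_and, hσ.le_and_mem_pair_iff, Finset.sum_ite_eq']
    simp
  · simp

theorem Function.Involutive.permMatrix_mul_self {R : Type*} [Fintype α] [NonAssocSemiring R]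
    (hσ : Function.Involutive σ) :
    (hσ.toPerm σ).permMatrix R * (hσ.toPerm σ).permMatrix R = 1 := by
  rw [← permMatrix_mul, show hσ.toPerm σ * hσ.toPerm σ = 1 from Equiv.ext hσ, permMatrix_one]

end OrbitRepresentatives

section PairBlock

variable {n : Type*} [Fintype n] [DecidableEq n]

noncomputable def pairSqrtBlock (a b : n) : Matrix n n ℂ :=
  (∑ i, (Pi.single a 1 + Pi.single b 1 : n → ℂ) i ^ 2)⁻¹ •
      vecMulVec (Pi.single a 1 + Pi.single b 1) (Pi.single a 1 + Pi.single b 1) +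
    (I * (∑ i, (Pi.single a 1 - Pi.single b 1 : n → ℂ) i ^ 2)⁻¹) •
      vecMulVec (Pi.single a 1 - Pi.single b 1) (Pi.single a 1 - Pi.single b 1)

theorem sum_sq_single_add_single {a b : n} (hab : a ≠ b) :
    ∑ i, (Pi.single a 1 + Pi.single b 1 : n → ℂ) i ^ 2 = 2 := by
  rw [Fintype.sum_eq_add a b hab]
  · simp [hab, hab.symm, one_add_one_eq_two]
  · rintro i ⟨hia, hib⟩
    simp [hia, hib]

theorem sum_sq_single_sub_single {a b : n} (hab : a ≠ b) :
    ∑ i, (Pi.single a 1 - Pi.single b 1 : n → ℂ) i ^ 2 = 2 := by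
  rw [Fintype.sum_eq_add a b hab]
  · simp [hab, hab.symm, one_add_one_eq_two]
  · rintro i ⟨hia, hib⟩
    simp [hia, hib]

theorem pairSqrtBlock_self (a : n) :
    pairSqrtBlock a a = vecMulVec (Pi.single a 1) (Pi.single a 1) := by
  -- the `e_a - e_a = 0` term carries the coefficient `I * 0⁻¹ = 0`
  rw [pairSqrtBlock, ← Pi.single_add, sub_self, vecMulVec_zero, smul_zero, add_zero]
  ext s t
  simp only [Pi.single_apply, ite_pow, ne_eq, OfNat.ofNat_ne_zero, not_false_eq_true, zero_pow,
    Finset.sum_ite_eq', Finset.mem_univ, ↓reduceIte, Matrix.smul_apply, vecMulVec_apply, mul_ite,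
    ite_mul, zero_mul, smul_eq_mul, mul_zero]
  split_ifs <;> norm_num

variable {σ : n → n} (hσ : Function.Involutive σ)

theorem vecMulVec_single_of_isFixedPt {a : n} (ha : σ a = a) :
    vecMulVec (Pi.single a 1) (Pi.single a 1) =
      diagonal (fun s => if s = a ∨ s = σ a then 1 else 0) *
        involutionSqrt ((hσ.toPerm σ).permMatrix ℂ) := by
  ext s t
  simp only [vecMulVec_apply, Pi.single_apply, mul_ite, mul_one, mul_zero, ha, or_self,
    involutionSqrt, diagonal_mul, Matrix.add_apply, Matrix.smul_apply, one_apply, smul_eq_mul,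
    PEquiv.toMatrix_apply, Equiv.toPEquiv_apply, Function.Involutive.coe_toPerm, Option.mem_def,
    Option.some.injEq, ite_mul, one_mul, zero_mul]
  split_ifs <;> grind

theorem pairSqrtBlock_eq (a : n) :
    pairSqrtBlock a (σ a) =
      diagonal (fun s => if s = a ∨ s = σ a then 1 else 0) *
        involutionSqrt ((hσ.toPerm σ).permMatrix ℂ) := by
  by_cases ha : σ a = a
  · rw [← vecMulVec_single_of_isFixedPt hσ ha, ha, pairSqrtBlock_self]
  · rw [pairSqrtBlock, sum_sq_single_add_single (Ne.symm ha),
      sum_sq_single_sub_single (Ne.symm ha)]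
    ext s t
    simp only [Matrix.add_apply, Matrix.smul_apply, vecMulVec_apply, Pi.add_apply, Pi.sub_apply,
      Pi.single_apply, smul_eq_mul, involutionSqrt, diagonal_mul, one_apply, mul_ite, mul_one,
      mul_zero, PEquiv.toMatrix_apply, Equiv.toPEquiv_apply, Function.Involutive.coe_toPerm,
      Option.mem_def, Option.some.injEq, ite_mul, one_mul, zero_mul]
    have hσa : σ (σ a) = a := hσ a
    split_ifs <;> grind

end PairBlock

section Flip

variable {T : ℕ} (hT : 0 < T)

theorem flipIdx_val (a : Fin T) :
    (flipIdx hT a).val = if a.val = 0 then 0 else T - a.val := by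
  have := a.isLt
  split_ifs with ha
  · simp [flipIdx, ha]
  · exact Nat.mod_eq_of_lt (by omega)

theorem flipIdx_involutive : Function.Involutive (flipIdx hT) := by
  intro a
  have := a.isLt
  ext
  simp only [flipIdx_val]
  split_ifs <;> omega

theorem flipIdx_eq_iff {s t : Fin T} :
    flipIdx hT s = t ↔ (s.val = 0 ∧ t.val = 0) ∨ s.val + t.val = T := by
  have := s.isLt
  have := t.isLt
  rw [Fin.ext_iff, flipIdx_val]
  split_ifs <;> omega

theorem filter_le_flipIdx :
    Finset.univ.filter (fun a => a ≤ flipIdx hT a) =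
      insert ⟨0, hT⟩ (Finset.univ.filter (fun a : Fin T => 1 ≤ a.val ∧ a.val ≤ T - a.val)) := by
  ext a
  simp only [Finset.mem_filter, Finset.mem_univ, true_and, Finset.mem_insert, Fin.le_def,
    flipIdx_val, Fin.ext_iff]
  split_ifs <;> omega

end Flip

/-- The complex square root of the flip permutation matrix `K`, namely
`K^{1/2} = e₁e₁ᵀ + ∑_ℓ [ (e_ℓ+e_{T-ℓ+2})(e_ℓ+e_{T-ℓ+2})ᵀ/‖·‖²
  + i (e_ℓ-e_{T-ℓ+2})(e_ℓ-e_{T-ℓ+2})ᵀ/‖·‖² ]`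
(sum over `ℓ ≥ 2` with `ℓ ≤ T-ℓ+2`, 0-indexed here; vanishing terms are
omitted automatically since `0⁻¹ = 0` in Lean), satisfies `(K^{1/2})² = K`. -/
theorem stmt5 (T : ℕ) (hT : 2 ≤ T)
    (K : Matrix (Fin T) (Fin T) ℂ)
    (hK : ∀ s t : Fin T, K s t =
      if (s.val = 0 ∧ t.val = 0) ∨ (s.val + t.val = T) then 1 else 0)
    (Ksqrt : Matrix (Fin T) (Fin T) ℂ)
    (hKsqrt : Ksqrt =
      vecMulVec (ebC (⟨0, by omega⟩ : Fin T)) (ebC (⟨0, by omega⟩ : Fin T)) +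
      ∑ a ∈ Finset.univ.filter (fun a : Fin T => 1 ≤ a.val ∧ a.val ≤ T - a.val),
        ((∑ i, (ebC a + ebC (flipIdx (by omega) a)) i ^ 2)⁻¹ •
            vecMulVec (ebC a + ebC (flipIdx (by omega) a))
              (ebC a + ebC (flipIdx (by omega) a))
          + (Complex.I * (∑ i, (ebC a - ebC (flipIdx (by omega) a)) i ^ 2)⁻¹) •
            vecMulVec (ebC a - ebC (flipIdx (by omega) a))
              (ebC a - ebC (flipIdx (by omega) a)))) :
    Ksqrt * Ksqrt = K := by
  have hT0 : 0 < T := by omega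
  have hσ := flipIdx_involutive hT0
  have hK_perm : K = (hσ.toPerm _).permMatrix ℂ := by
    ext s t
    simp [hK, PEquiv.toMatrix_apply, flipIdx_eq_iff]
  have hzero : flipIdx hT0 ⟨0, hT0⟩ = ⟨0, hT0⟩ := by simp [flipIdx_eq_iff]
  have hKsqrt' : Ksqrt = involutionSqrt K := by
    change Ksqrt = vecMulVec (Pi.single _ 1) (Pi.single _ 1) +
      ∑ a ∈ _, pairSqrtBlock a (flipIdx hT0 a) at hKsqrt
    have h0 : (⟨0, hT0⟩ : Fin T) ∉ Finset.univ.filter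
        (fun a : Fin T => 1 ≤ a.val ∧ a.val ≤ T - a.val) := by simp
    have hD := hσ.sum_diagonal_orbit_indicator (R := ℂ)
    rw [filter_le_flipIdx, Finset.sum_insert h0] at hD
    rw [hKsqrt, vecMulVec_single_of_isFixedPt hσ hzero, Finset.sum_congr rfl
      (fun a _ => pairSqrtBlock_eq hσ a), ← Finset.sum_mul, ← add_mul, hD, one_mul, hK_perm]
  rw [hKsqrt', involutionSqrt_mul_self (by rw [hK_perm]; exact hσ.permMatrix_mul_self)]
end

section
/- Let Λ = diag(λ̂₁,…,λ̂_d) and Λ^⋆ = diag(λ₁,…,λ_d) be diagonal matrices with all diagonal entries bounded below by some λ_min > 0, and let Q ∈ ℝ^{d×d} be any matrix. Then ‖Λ^{-1/2}Q − QΛ^{⋆-1/2}‖_F² ≤ ‖ΛQ − QΛ^⋆‖_F² / [(√λ_min + √λ_min)² · λ_min²]. -/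
open Matrix

/-- The Frobenius norm of a matrix, as the square root of the sum of squared
entries. -/
noncomputable def frobNorm {d : ℕ} (M : Matrix (Fin d) (Fin d) ℝ) : ℝ :=
  Real.sqrt (∑ i, ∑ j, M i j ^ 2)

lemma key_entry (a b lammin : ℝ) (hm : 0 < lammin) (ha : lammin ≤ a) (hb : lammin ≤ b)
    (q : ℝ) :
    ((Real.sqrt a)⁻¹ * q - q * (Real.sqrt b)⁻¹) ^ 2 ≤
      (a * q - q * b) ^ 2 / ((Real.sqrt lammin + Real.sqrt lammin) ^ 2 * lammin ^ 2) := by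
  have ha0 : 0 < a := hm.trans_le ha
  have hb0 : 0 < b := hm.trans_le hb
  have hsa : 0 < Real.sqrt a := Real.sqrt_pos.2 ha0
  have hsb : 0 < Real.sqrt b := Real.sqrt_pos.2 hb0
  have hsm : 0 < Real.sqrt lammin := Real.sqrt_pos.2 hm
  have hC : 0 < (Real.sqrt lammin + Real.sqrt lammin) ^ 2 * lammin ^ 2 := by positivity
  have general : ∀ x y : ℝ, 0 < x → 0 < y →
      (x⁻¹ * q - q * y⁻¹) ^ 2 = (x ^ 2 * q - q * y ^ 2) ^ 2 / (x ^ 2 * y ^ 2 * (x + y) ^ 2) := by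
    intro x y hx hy
    have hxy : x + y ≠ 0 := by positivity
    field_simp
    ring
  have heq : ((Real.sqrt a)⁻¹ * q - q * (Real.sqrt b)⁻¹) ^ 2 =
      (a * q - q * b) ^ 2 / (a * b * (Real.sqrt a + Real.sqrt b) ^ 2) := by
    have := general (Real.sqrt a) (Real.sqrt b) hsa hsb
    rwa [Real.sq_sqrt ha0.le, Real.sq_sqrt hb0.le] at this
  rw [heq]
  apply div_le_div_of_nonneg_left (by positivity) hC
  have e1 : (Real.sqrt lammin + Real.sqrt lammin) ^ 2 ≤ (Real.sqrt a + Real.sqrt b) ^ 2 := by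
    apply pow_le_pow_left₀ (by positivity)
      (add_le_add (Real.sqrt_le_sqrt ha) (Real.sqrt_le_sqrt hb))
  have e2 : lammin ^ 2 ≤ a * b := by nlinarith
  calc (Real.sqrt lammin + Real.sqrt lammin) ^ 2 * lammin ^ 2
      ≤ (Real.sqrt a + Real.sqrt b) ^ 2 * (a * b) :=
        mul_le_mul e1 e2 (by positivity) (by positivity)
    _ = a * b * (Real.sqrt a + Real.sqrt b) ^ 2 := by ring

/-- For diagonal `Λ = diag(λ̂)` and `Λ⋆ = diag(λ)` with all diagonal entries
at least `λ_min > 0`, and any `Q`,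
`‖Λ^{-1/2}Q - QΛ⋆^{-1/2}‖_F ≤ ‖ΛQ - QΛ⋆‖_F / (2 λ_min^{3/2})`, and more
precisely
`‖Λ^{-1/2}Q - QΛ⋆^{-1/2}‖_F² ≤ ‖ΛQ - QΛ⋆‖_F² / ((√λ_min + √λ_min)² λ_min²)`. -/
theorem stmt18 (d : ℕ)
    (lamhat lam : Fin d → ℝ) (lammin : ℝ) (hmin : 0 < lammin)
    (h1 : ∀ k, lammin ≤ lamhat k) (h2 : ∀ k, lammin ≤ lam k)
    (Q : Matrix (Fin d) (Fin d) ℝ) :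
    frobNorm (Matrix.diagonal (fun k => (Real.sqrt (lamhat k))⁻¹) * Q
          - Q * Matrix.diagonal (fun k => (Real.sqrt (lam k))⁻¹)) ≤
        frobNorm (Matrix.diagonal lamhat * Q - Q * Matrix.diagonal lam) /
          (2 * Real.sqrt (lammin ^ 3)) ∧
      frobNorm (Matrix.diagonal (fun k => (Real.sqrt (lamhat k))⁻¹) * Q
          - Q * Matrix.diagonal (fun k => (Real.sqrt (lam k))⁻¹)) ^ 2 ≤
        frobNorm (Matrix.diagonal lamhat * Q - Q * Matrix.diagonal lam) ^ 2 /
          ((Real.sqrt lammin + Real.sqrt lammin) ^ 2 * lammin ^ 2) := by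
  set A := Matrix.diagonal (fun k => (Real.sqrt (lamhat k))⁻¹) * Q
      - Q * Matrix.diagonal (fun k => (Real.sqrt (lam k))⁻¹) with hA
  set B := Matrix.diagonal lamhat * Q - Q * Matrix.diagonal lam with hB
  set C := (Real.sqrt lammin + Real.sqrt lammin) ^ 2 * lammin ^ 2 with hCdef
  have hsm : 0 < Real.sqrt lammin := Real.sqrt_pos.2 hmin
  have hC : 0 < C := by positivity
  set S1 := ∑ i, ∑ j, A i j ^ 2 with hS1
  set S2 := ∑ i, ∑ j, B i j ^ 2 with hS2
  have hS1nn : 0 ≤ S1 := Finset.sum_nonneg fun i _ => Finset.sum_nonneg fun j _ => sq_nonneg _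
  have hS2nn : 0 ≤ S2 := Finset.sum_nonneg fun i _ => Finset.sum_nonneg fun j _ => sq_nonneg _
  have hsum : S1 ≤ S2 / C := by
    rw [hS1, hS2, Finset.sum_div]
    apply Finset.sum_le_sum
    intro i _
    rw [Finset.sum_div]
    apply Finset.sum_le_sum
    intro j _
    have := key_entry (lamhat i) (lam j) lammin hmin (h1 i) (h2 j) (Q i j)
    simpa [hA, hB, Matrix.sub_apply, Matrix.diagonal_mul, Matrix.mul_diagonal] using this
  have hfA : frobNorm A = Real.sqrt S1 := rfl
  have hfB : frobNorm B = Real.sqrt S2 := rfl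
  constructor
  · rw [hfA, hfB]
    have h2s : 2 * Real.sqrt (lammin ^ 3) = Real.sqrt C := by
      rw [hCdef, Real.sqrt_mul (by positivity) (lammin ^ 2),
        Real.sqrt_sq (by positivity : (0:ℝ) ≤ Real.sqrt lammin + Real.sqrt lammin),
        Real.sqrt_sq hmin.le, show lammin ^ 3 = lammin ^ 2 * lammin by ring,
        Real.sqrt_mul (by positivity) lammin, Real.sqrt_sq hmin.le]
      ring
    rw [h2s, ← Real.sqrt_div hS2nn C]
    exact Real.sqrt_le_sqrt hsum
  · rw [hfA, hfB, Real.sq_sqrt hS1nn, Real.sq_sqrt hS2nn]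
    exact hsum
end
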